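/- Let γ > 1 and v₊ > 0 be given. Then there exist constants C, δ* > 0 such that for any 0 < δ < δ* and any (v,w) ∈ ℝ₊² satisfying |p(v) − p(w)| < δ and |p(w) − p(v₊)| < δ, the following three inequalities hold: p(v|w) ≤ ((γ+1)/(2γ)·1/p(w) + Cδ)|p(v) − p(w)|²; Q(v|w) ≥ (p(w)^{−1/γ−1}/(2γ))|p(v) − p(w)|² − ((1+γ)/(3γ²))·p(w)^{−1/γ−2}·(p(v) − p(w))³; and Q(v|w) ≤ (p(w)^{−1/γ−1}/(2γ) + Cδ)|p(v) − p(w)|². -/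

import Mathlib

noncomputable section
open MeasureTheory Set Filter Topology Real

namespace NS3D

abbrev Spc : Type := EuclideanSpace ℝ (Fin 3)

def e (i : Fin 3) : Spc := EuclideanSpace.single i 1

def PeriodicTD {F : Type*} (f : Spc → F) : Prop :=
  ∀ x : Spc, f (x + e 1) = f x ∧ f (x + e 2) = f x

def cell : Set Spc := {x : Spc | x 1 ∈ Icc (0:ℝ) 1 ∧ x 2 ∈ Icc (0:ℝ) 1}
def cellP : Set Spc := {x : Spc | 0 < x 0 ∧ x 1 ∈ Icc (0:ℝ) 1 ∧ x 2 ∈ Icc (0:ℝ) 1}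
def cellM : Set Spc := {x : Spc | x 0 < 0 ∧ x 1 ∈ Icc (0:ℝ) 1 ∧ x 2 ∈ Icc (0:ℝ) 1}
def cube : Set Spc := {x : Spc | x 0 ∈ Icc (0:ℝ) 1 ∧ x 1 ∈ Icc (0:ℝ) 1 ∧ x 2 ∈ Icc (0:ℝ) 1}

variable {F : Type*} [NormedAddCommGroup F] [NormedSpace ℝ F]

def L2Sq (s : Set Spc) (f : Spc → F) : ℝ := ∫ x in s, ‖f x‖^2
def L2 (s : Set Spc) (f : Spc → F) : ℝ := Real.sqrt (L2Sq s f)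
def MemL2 (s : Set Spc) (f : Spc → F) : Prop := IntegrableOn (fun x => ‖f x‖^2) s volume

def DSq (n : ℕ) (f : Spc → F) : ℝ := ∫ x in cell, ‖iteratedFDeriv ℝ n f x‖^2
def MemDSq (n : ℕ) (f : Spc → F) : Prop :=
  IntegrableOn (fun x => ‖iteratedFDeriv ℝ n f x‖^2) cell volume

def HSq (k : ℕ) (f : Spc → F) : ℝ := ∑ n ∈ Finset.range (k+1), DSq n f
def Hnorm (k : ℕ) (f : Spc → F) : ℝ := Real.sqrt (HSq k f)
def MemH (k : ℕ) (f : Spc → F) : Prop := ∀ n, n ≤ k → MemDSq n f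

def GradHSq (k : ℕ) (f : Spc → F) : ℝ := ∑ n ∈ Finset.Icc 1 (k+1), DSq n f
def GradHnorm (k : ℕ) (f : Spc → F) : ℝ := Real.sqrt (GradHSq k f)
def MemGradH (k : ℕ) (f : Spc → F) : Prop := ∀ n, 1 ≤ n → n ≤ k+1 → MemDSq n f

def ContHk (k : ℕ) (I : Set ℝ) (f : ℝ → Spc → F) : Prop :=
  (∀ t ∈ I, MemH k (f t)) ∧
  ∀ s ∈ I, Tendsto (fun t => HSq k (fun x => f t x - f s x)) (𝓝[I] s) (𝓝 (0:ℝ))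

def grad (f : Spc → ℝ) (x : Spc) : Spc :=
  (WithLp.equiv 2 (Fin 3 → ℝ)).symm (fun i => fderiv ℝ f x (e i))
def divg (u : Spc → Spc) (x : Spc) : ℝ := ∑ i, fderiv ℝ (fun y => u y i) x (e i)
def lap (f : Spc → ℝ) (x : Spc) : ℝ :=
  ∑ i, fderiv ℝ (fun y => fderiv ℝ f y (e i)) x (e i)
def vec3 (a b c : ℝ) : Spc := (WithLp.equiv 2 (Fin 3 → ℝ)).symm ![a, b, c]
def uvec (a : ℝ) : Spc := vec3 a 0 0
def curl (u : Spc → Spc) (x : Spc) : Spc :=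
  vec3 (fderiv ℝ (fun y => u y 2) x (e 1) - fderiv ℝ (fun y => u y 1) x (e 2))
       (fderiv ℝ (fun y => u y 0) x (e 2) - fderiv ℝ (fun y => u y 2) x (e 0))
       (fderiv ℝ (fun y => u y 1) x (e 0) - fderiv ℝ (fun y => u y 0) x (e 1))

def pfn (γ v : ℝ) : ℝ := v ^ (-γ)
def pderivfn (γ v : ℝ) : ℝ := -γ * v ^ (-γ - 1)
def Qfn (γ v : ℝ) : ℝ := v ^ (1 - γ) / (γ - 1)
def pRel (γ v w : ℝ) : ℝ := pfn γ v - pfn γ w - pderivfn γ w * (v - w)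
def QRel (γ v w : ℝ) : ℝ := Qfn γ v - Qfn γ w + pfn γ w * (v - w)

structure RHLax (γ σ1s σ2s vminus uminus vm um vplus uplus : ℝ) : Prop where
  posminus : 0 < vminus
  posm : 0 < vm
  posplus : 0 < vplus
  rh1v : -σ1s * (vm - vminus) = um - uminus
  rh1u : -σ1s * (um - uminus) + (pfn γ vm - pfn γ vminus) = 0
  lax1v : vm < vminus
  lax1u : um < uminus
  rh2v : -σ2s * (vplus - vm) = uplus - um
  rh2u : -σ2s * (uplus - um) + (pfn γ vplus - pfn γ vm) = 0
  lax2v : vm < vplus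
  lax2u : uplus < um

structure ViscousShock (γ μ lam σs vL uL vR uR : ℝ) (vt ut : ℝ → ℝ) : Prop where
  smooth_v : ContDiff ℝ 3 vt
  smooth_u : ContDiff ℝ 3 ut
  pos : ∀ ξ, 0 < vt ξ
  ode1 : ∀ ξ, -σs * deriv vt ξ = deriv ut ξ
  ode2 : ∀ ξ, -σs * deriv ut ξ + deriv (fun y => pfn γ (vt y)) ξ
            = (2*μ+lam) * deriv (deriv ut) ξ
  limL_v : Tendsto vt atBot (𝓝 vL)
  limL_u : Tendsto ut atBot (𝓝 uL)
  limR_v : Tendsto vt atTop (𝓝 vR)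
  limR_u : Tendsto ut atTop (𝓝 uR)

def heff (μ lam : ℝ) (vt ut : ℝ → ℝ) (ξ : ℝ) : ℝ := ut ξ - (2*μ+lam) * deriv vt ξ
def wgt (γ δ ν vm : ℝ) (vt : ℝ → ℝ) (ξ : ℝ) : ℝ := 1 + ν * (pfn γ vm - pfn γ (vt ξ)) / δ

def vcompY (c σ1 σ2 : ℝ) (f1 f2 : ℝ → ℝ) (t Y1 Y2 x1 : ℝ) : ℝ :=
  f1 (x1 - σ1*t - Y1) + f2 (x1 - σ2*t - Y2) - c
def acompY (γ vm σ1 σ2 δ1 δ2 ν1 ν2 : ℝ) (vt1 vt2 : ℝ → ℝ) (t Y1 Y2 x1 : ℝ) : ℝ :=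
  wgt γ δ1 ν1 vm vt1 (x1 - σ1*t - Y1) + wgt γ δ2 ν2 vm vt2 (x1 - σ2*t - Y2) - 1

def sigm (γ vm : ℝ) : ℝ := Real.sqrt (γ * vm ^ (-γ - 1))
def alpham (γ vm : ℝ) : ℝ := (γ + 1) / (2 * γ * sigm γ vm * pfn γ vm)
def Mconst (γ vm : ℝ) : ℝ := (5/4) * (sigm γ vm)^4 * vm^2 * alpham γ vm

def cutoff1 (σ1 σ2 t x1 : ℝ) : ℝ :=
  if x1 ≤ (3*σ1+σ2)/4 * t then 1
  else if (σ1+3*σ2)/4 * t ≤ x1 then 0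
  else ((σ1+3*σ2)/4 * t - x1) / ((σ1+3*σ2)/4 * t - (3*σ1+σ2)/4 * t)
def cutoff2 (σ1 σ2 t x1 : ℝ) : ℝ := 1 - cutoff1 σ1 σ2 t x1

def shiftF1 (γ μ lam vm σ1 σ2 σ1s δ1 δ2 ν1 ν2 M : ℝ) (vt1 ut1 vt2 : ℝ → ℝ)
    (v : ℝ → Spc → ℝ) (t Y1 Y2 : ℝ) : ℝ :=
  -(M/δ1) *
    ((∫ x in cell, (acompY γ vm σ1 σ2 δ1 δ2 ν1 ν2 vt1 vt2 t Y1 Y2 (x 0) / σ1s)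
        * deriv (heff μ lam vt1 ut1) (x 0 - σ1*t - Y1)
        * (pfn γ (v t x) - pfn γ (vcompY vm σ1 σ2 vt1 vt2 t Y1 Y2 (x 0))))
     - ∫ x in cell, acompY γ vm σ1 σ2 δ1 δ2 ν1 ν2 vt1 vt2 t Y1 Y2 (x 0)
        * deriv (fun y => pfn γ (vt1 y)) (x 0 - σ1*t - Y1)
        * (v t x - vcompY vm σ1 σ2 vt1 vt2 t Y1 Y2 (x 0)))
def shiftF2 (γ μ lam vm σ1 σ2 σ2s δ1 δ2 ν1 ν2 M : ℝ) (vt1 vt2 ut2 : ℝ → ℝ)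
    (v : ℝ → Spc → ℝ) (t Y1 Y2 : ℝ) : ℝ :=
  -(M/δ2) *
    ((∫ x in cell, (acompY γ vm σ1 σ2 δ1 δ2 ν1 ν2 vt1 vt2 t Y1 Y2 (x 0) / σ2s)
        * deriv (heff μ lam vt2 ut2) (x 0 - σ2*t - Y2)
        * (pfn γ (v t x) - pfn γ (vcompY vm σ1 σ2 vt1 vt2 t Y1 Y2 (x 0))))
     - ∫ x in cell, acompY γ vm σ1 σ2 δ1 δ2 ν1 ν2 vt1 vt2 t Y1 Y2 (x 0)
        * deriv (fun y => pfn γ (vt2 y)) (x 0 - σ2*t - Y2)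
        * (v t x - vcompY vm σ1 σ2 vt1 vt2 t Y1 Y2 (x 0)))

def ShiftODE (γ μ lam vm σ1 σ2 σ1s σ2s δ1 δ2 ν1 ν2 T : ℝ)
    (vt1 ut1 vt2 ut2 : ℝ → ℝ) (v : ℝ → Spc → ℝ) (X1 X2 dX1 dX2 : ℝ → ℝ) : Prop :=
  X1 0 = 0 ∧ X2 0 = 0 ∧
  ∀ t ∈ Icc 0 T,
    HasDerivAt X1 (dX1 t) t ∧ HasDerivAt X2 (dX2 t) t ∧
    dX1 t = shiftF1 γ μ lam vm σ1 σ2 σ1s δ1 δ2 ν1 ν2 (Mconst γ vm) vt1 ut1 vt2 v t (X1 t) (X2 t) ∧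
    dX2 t = shiftF2 γ μ lam vm σ1 σ2 σ2s δ1 δ2 ν1 ν2 (Mconst γ vm) vt1 vt2 ut2 v t (X1 t) (X2 t)

def NSvol (γ μ lam : ℝ) (I : Set ℝ) (v : ℝ → Spc → ℝ) (u : ℝ → Spc → Spc) : Prop :=
  (∀ t ∈ I, PeriodicTD (v t) ∧ PeriodicTD (u t)) ∧
  ∀ t ∈ I, ∀ x : Spc,
    0 < v t x ∧
    (1 / v t x) * (deriv (fun s => v s x) t + fderiv ℝ (v t) x (u t x)) = divg (u t) x ∧
    (1 / v t x) • (deriv (fun s => u s x) t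
        + (WithLp.equiv 2 (Fin 3 → ℝ)).symm (fun i => fderiv ℝ (fun y => u t y i) x (u t x)))
      + grad (fun y => pfn γ (v t y)) x
    = (2*μ+lam) • grad (fun y => divg (u t) y) x - μ • curl (curl (u t)) x

def NSdens (γ b μ lam : ℝ) (I : Set ℝ) (ρ : ℝ → Spc → ℝ) (u : ℝ → Spc → Spc) : Prop :=
  (∀ t ∈ I, PeriodicTD (ρ t) ∧ PeriodicTD (u t)) ∧
  ∀ t ∈ I, ∀ x : Spc,
    0 < ρ t x ∧
    (deriv (fun s => ρ s x) t + divg (fun y => ρ t y • u t y) x = 0) ∧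
    ∀ i : Fin 3,
      deriv (fun s => ρ s x * u s x i) t
        + divg (fun y => (ρ t y * u t y i) • u t y) x
        + fderiv ℝ (fun y => b * ρ t y ^ γ) x (e i)
      = μ * lap (fun y => u t y i) x
        + (μ+lam) * fderiv ℝ (fun y => divg (u t) y) x (e i)

structure RHLaxDens (γ b σ1 σ2 ρminus uminus ρm um ρplus uplus : ℝ) : Prop where
  posminus : 0 < ρminus
  posm : 0 < ρm
  posplus : 0 < ρplus
  rh1m : -σ1 * (ρm - ρminus) + (ρm * um - ρminus * uminus) = 0
  rh1mom : -σ1 * (ρm * um - ρminus * uminus) + (ρm * um^2 - ρminus * uminus^2)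
      + (b * ρm ^ γ - b * ρminus ^ γ) = 0
  lax1ρ : ρminus < ρm
  lax1u : um < uminus
  rh2m : -σ2 * (ρplus - ρm) + (ρplus * uplus - ρm * um) = 0
  rh2mom : -σ2 * (ρplus * uplus - ρm * um) + (ρplus * uplus^2 - ρm * um^2)
      + (b * ρplus ^ γ - b * ρm ^ γ) = 0
  lax2ρ : ρplus < ρm
  lax2u : uplus < um

structure ViscousShockDens (γ b μ lam σ ρL uL ρR uR : ℝ) (ρt ut : ℝ → ℝ) : Prop where
  smooth_ρ : ContDiff ℝ 3 ρt
  smooth_u : ContDiff ℝ 3 ut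
  pos : ∀ ξ, 0 < ρt ξ
  ode1 : ∀ ξ, -σ * deriv ρt ξ + deriv (fun y => ρt y * ut y) ξ = 0
  ode2 : ∀ ξ, -σ * deriv (fun y => ρt y * ut y) ξ + deriv (fun y => ρt y * (ut y)^2) ξ
        + deriv (fun y => b * ρt y ^ γ) ξ = (2*μ+lam) * deriv (deriv ut) ξ
  limL_ρ : Tendsto ρt atBot (𝓝 ρL)
  limL_u : Tendsto ut atBot (𝓝 uL)
  limR_ρ : Tendsto ρt atTop (𝓝 ρR)
  limR_u : Tendsto ut atTop (𝓝 uR)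


/-! In the pressure variables `q = p(v)`, `r = p(w)` (so `v = q ^ (-1/γ)`) both relative
quantities vanish to second order at `q = r`: their `q`-derivatives are `(q - r) q ^ (-1/γ - 1) / γ`
and `1 - (r / q) ^ (1 + 1/γ)`. Comparing these derivatives on the interval between `r` and `q`
with those of the quadratic and cubic models reduces the three estimates to the tangent-line
inequality for the convex powers `x ^ c`, `c ≤ 0`, and the one-sided Lipschitz bound it implies
for `x ^ c` on `[lo, ∞)`. As `q` and `r` lie within `2δ` of `p(v₊)`, `lo = p(v₊)/2` serves
uniformly once `δ < p(v₊)/4`. -/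

end NS3D

theorem sub_le_sub_of_sub_mul_deriv_le {f g f' g' : ℝ → ℝ} {q r : ℝ}
    (hf : ∀ x ∈ uIcc q r, HasDerivAt f (f' x) x)
    (hg : ∀ x ∈ uIcc q r, HasDerivAt g (g' x) x)
    (h : ∀ x ∈ uIcc q r, (x - r) * f' x ≤ (x - r) * g' x) :
    f q - f r ≤ g q - g r := by
  have hD : ∀ x ∈ uIcc q r, HasDerivAt (g - f) (g' x - f' x) x :=
    fun x hx => (hg x hx).sub (hf x hx)
  have hcont : ContinuousOn (g - f) (uIcc q r) :=
    fun x hx => (hD x hx).continuousAt.continuousWithinAt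
  rcases le_total q r with hqr | hrq
  · rw [uIcc_of_le hqr] at hD hcont h
    have hanti : AntitoneOn (g - f) (Icc q r) := by
      refine antitoneOn_of_hasDerivWithinAt_nonpos (convex_Icc q r) hcont
        (fun x hx => (hD x (interior_subset hx)).hasDerivWithinAt) fun x hx => ?_
      rw [interior_Icc] at hx
      nlinarith [h x (Ioo_subset_Icc_self hx), hx.2]
    have := hanti (left_mem_Icc.2 hqr) (right_mem_Icc.2 hqr) hqr
    simp only [Pi.sub_apply] at this
    linarith
  · rw [uIcc_of_ge hrq] at hD hcont h
    have hmono : MonotoneOn (g - f) (Icc r q) := by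
      refine monotoneOn_of_hasDerivWithinAt_nonneg (convex_Icc r q) hcont
        (fun x hx => (hD x (interior_subset hx)).hasDerivWithinAt) fun x hx => ?_
      rw [interior_Icc] at hx
      nlinarith [h x (Ioo_subset_Icc_self hx), hx.1]
    have := hmono (left_mem_Icc.2 hrq) (right_mem_Icc.2 hrq) hrq
    simp only [Pi.sub_apply] at this
    linarith

theorem hasDerivAt_mul_sub_sq (M r x : ℝ) :
    HasDerivAt (fun y => M * (y - r) ^ 2) (2 * M * (x - r)) x := by
  refine ((((hasDerivAt_id' x).sub_const r).pow 2).const_mul M).congr_deriv ?_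
  norm_num
  ring

namespace Real

theorem rpow_add_mul_sub_le_rpow_of_nonpos {c x r : ℝ} (hc : c ≤ 0) (hx : 0 < x)
    (hr : 0 < r) : r ^ c + c * r ^ (c - 1) * (x - r) ≤ x ^ c := by
  have hpos : ∀ y ∈ uIcc x r, 0 < y := fun y hy => (lt_min hx hr).trans_le hy.1
  have key := sub_le_sub_of_sub_mul_deriv_le (f := fun y => c * r ^ (c - 1) * y)
    (g := fun y => y ^ c) (fun y _ => (hasDerivAt_id y).const_mul (c * r ^ (c - 1)))
    (fun y hy => hasDerivAt_rpow_const (Or.inl (hpos y hy).ne')) fun y hy => by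
      have hy := hpos y hy
      rcases le_total y r with hyr | hry
      · have := rpow_le_rpow_of_nonpos hy hyr (by linarith : c - 1 ≤ 0)
        nlinarith [mul_nonneg (mul_nonneg (neg_nonneg.2 hc) (sub_nonneg.2 hyr))
          (sub_nonneg.2 this)]
      · have := rpow_le_rpow_of_nonpos hr hry (by linarith : c - 1 ≤ 0)
        nlinarith [mul_nonneg (mul_nonneg (neg_nonneg.2 hc) (sub_nonneg.2 hry))
          (sub_nonneg.2 this)]
  linarith

theorem rpow_sub_rpow_le_of_nonpos {c lo x r : ℝ} (hc : c ≤ 0) (hlo : 0 < lo)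
    (hx : lo ≤ x) (hr : lo ≤ r) : x ^ c - r ^ c ≤ -c * lo ^ (c - 1) * |x - r| := by
  have hslope : 0 ≤ -c * lo ^ (c - 1) := mul_nonneg (neg_nonneg.2 hc) (by positivity)
  rcases le_total r x with hrx | hxr
  · have := rpow_le_rpow_of_nonpos (hlo.trans_le hr) hrx hc
    nlinarith [abs_nonneg (x - r)]
  · have tangent := rpow_add_mul_sub_le_rpow_of_nonpos hc (hlo.trans_le hr) (hlo.trans_le hx)
    have hmono := rpow_le_rpow_of_nonpos hlo hx (by linarith : c - 1 ≤ 0)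
    rw [abs_of_nonpos (sub_nonpos.2 hxr)]
    nlinarith [mul_le_mul_of_nonneg_left hmono (mul_nonneg (neg_nonneg.2 hc) (sub_nonneg.2 hxr))]

end Real

namespace NS3D

-- `p(v|w)` and `Q(v|w)` expressed through `q = p(v)` and `r = p(w)`.
def pRelOfPressure (γ q r : ℝ) : ℝ := q - r + γ * r ^ (1 + 1/γ) * (q ^ (-1/γ) - r ^ (-1/γ))

def QRelOfPressure (γ q r : ℝ) : ℝ :=
  (q ^ (1 - 1/γ) - r ^ (1 - 1/γ)) / (γ - 1) + r * (q ^ (-1/γ) - r ^ (-1/γ))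

theorem pfn_rpow {γ v : ℝ} (hv : 0 < v) (s : ℝ) : pfn γ v ^ s = v ^ (-γ * s) := by
  rw [pfn, ← Real.rpow_mul hv.le]

theorem pfn_rpow_neg_one_div {γ v : ℝ} (hγ : γ ≠ 0) (hv : 0 < v) :
    pfn γ v ^ (-1/γ) = v := by
  rw [pfn_rpow hv, show -γ * (-1/γ) = 1 by field_simp, Real.rpow_one]

theorem pRel_eq_pRelOfPressure {γ v w : ℝ} (hγ : γ ≠ 0) (hv : 0 < v) (hw : 0 < w) :
    pRel γ v w = pRelOfPressure γ (pfn γ v) (pfn γ w) := by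
  rw [pRel, pRelOfPressure, pderivfn, pfn_rpow_neg_one_div hγ hv, pfn_rpow_neg_one_div hγ hw,
    pfn_rpow hw, show -γ * (1 + 1/γ) = -γ - 1 by field_simp; ring]
  ring

theorem QRel_eq_QRelOfPressure {γ v w : ℝ} (hγ : γ ≠ 0) (hv : 0 < v) (hw : 0 < w) :
    QRel γ v w = QRelOfPressure γ (pfn γ v) (pfn γ w) := by
  have hexp : -γ * (1 - 1/γ) = 1 - γ := by field_simp; ring
  rw [QRel, QRelOfPressure, Qfn, Qfn, pfn_rpow_neg_one_div hγ hv, pfn_rpow_neg_one_div hγ hw,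
    pfn_rpow hv, pfn_rpow hw, hexp]
  ring

theorem hasDerivAt_pRelOfPressure {γ r x : ℝ} (hγ : γ ≠ 0) (hx : 0 < x) :
    HasDerivAt (pRelOfPressure γ · r) (1 - r ^ (1 + 1/γ) * x ^ (-1/γ - 1)) x := by
  have h := ((hasDerivAt_id' x).sub_const r).add (((Real.hasDerivAt_rpow_const (p := -1/γ)
    (Or.inl hx.ne')).sub_const (r ^ (-1/γ))).const_mul (γ * r ^ (1 + 1/γ)))
  refine h.congr_deriv ?_
  field_simp
  ring

theorem hasDerivAt_QRelOfPressure {γ r x : ℝ} (hγ : γ ≠ 0) (hγ1 : γ ≠ 1) (hx : 0 < x) :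
    HasDerivAt (QRelOfPressure γ · r) ((x - r) * x ^ (-1/γ - 1) / γ) x := by
  have h1 := ((Real.hasDerivAt_rpow_const (p := 1 - 1/γ) (Or.inl hx.ne')).sub_const
    (r ^ (1 - 1/γ))).div_const (γ - 1)
  have h2 := ((Real.hasDerivAt_rpow_const (p := -1/γ) (Or.inl hx.ne')).sub_const
    (r ^ (-1/γ))).const_mul r
  have hexp : x ^ (1 - 1/γ - 1) = x * x ^ (-1/γ - 1) := by
    rw [show 1 - 1/γ - 1 = 1 + (-1/γ - 1) by ring, Real.rpow_add hx, Real.rpow_one]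
  refine (h1.add h2).congr_deriv ?_
  rw [hexp]
  have : γ - 1 ≠ 0 := sub_ne_zero.2 hγ1
  field_simp
  ring

theorem sub_mul_one_sub_rpow_le {γ lo hi δ x r : ℝ} (hγ : 0 < γ) (hlo : 0 < lo)
    (hx : lo ≤ x) (hr : lo ≤ r) (hr' : r ≤ hi) (hxr : |x - r| ≤ δ) :
    (x - r) * (1 - r ^ (1 + 1/γ) * x ^ (-1/γ - 1))
      ≤ ((1 + 1/γ) / r + (1 + 1/γ) * (2 + 1/γ) * hi ^ (1 + 1/γ) * lo ^ (-1/γ - 3) * δ)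
        * (x - r) ^ 2 := by
  have hx0 : 0 < x := hlo.trans_le hx
  have hr0 : 0 < r := hlo.trans_le hr
  have hγ' : 0 < 1/γ := one_div_pos.2 hγ
  have hc : -1/γ - 1 ≤ 0 := by rw [neg_div]; linarith
  set P := r ^ (1 + 1/γ)
  have hP : 0 < P := by positivity
  have hP1 : P * r ^ (-1/γ - 1) = 1 := by
    rw [← Real.rpow_add hr0, show 1 + 1/γ + (-1/γ - 1) = 0 by ring, Real.rpow_zero]
  have hP2 : P * r ^ (-1/γ - 2) = r⁻¹ := by
    rw [← Real.rpow_add hr0, show 1 + 1/γ + (-1/γ - 2) = -1 by ring, Real.rpow_neg_one]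
  rcases le_total r x with hrx | hxr'
  · have hK : 0 ≤ (1 + 1/γ) * (2 + 1/γ) * hi ^ (1 + 1/γ) * lo ^ (-1/γ - 3) * δ :=
      mul_nonneg (by have := hlo.trans_le (hr.trans hr'); positivity) ((abs_nonneg _).trans hxr)
    have tangent := Real.rpow_add_mul_sub_le_rpow_of_nonpos hc hx0 hr0
    rw [show -1/γ - 1 - 1 = -1/γ - 2 by ring] at tangent
    have hslope : 1 - P * x ^ (-1/γ - 1) ≤ (1 + 1/γ) / r * (x - r) := by
      have hlin : P * (r ^ (-1/γ - 1) + (-1/γ - 1) * r ^ (-1/γ - 2) * (x - r))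
          = 1 - (1 + 1/γ) / r * (x - r) := by
        -- ring normalizes the exponents inconsistently, so the powers are made opaque first
        generalize r ^ (-1/γ - 1) = A at hP1 ⊢
        generalize r ^ (-1/γ - 2) = B at hP2 ⊢
        rw [div_eq_mul_inv]
        linear_combination hP1 + (-1/γ - 1) * (x - r) * hP2
      linarith [mul_le_mul_of_nonneg_left tangent hP.le]
    nlinarith [mul_le_mul_of_nonneg_left hslope (sub_nonneg.2 hrx),
      mul_nonneg hK (sq_nonneg (x - r))]
  · have tangent := Real.rpow_add_mul_sub_le_rpow_of_nonpos hc hr0 hx0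
    rw [show -1/γ - 1 - 1 = -1/γ - 2 by ring] at tangent
    have lipschitz := Real.rpow_sub_rpow_le_of_nonpos (c := -1/γ - 2) (by linarith) hlo hx hr
    rw [show -1/γ - 2 - 1 = -1/γ - 3 by ring, show -(-1/γ - 2) = 2 + 1/γ by ring] at lipschitz
    have hPhi : P ≤ hi ^ (1 + 1/γ) := Real.rpow_le_rpow hr0.le hr' (by positivity)
    have hL : 0 ≤ (2 + 1/γ) * lo ^ (-1/γ - 3) * δ :=
      mul_nonneg (by positivity) ((abs_nonneg _).trans hxr)
    have hgrowth : P * x ^ (-1/γ - 1) - 1 ≤ (1 + 1/γ) * (P * x ^ (-1/γ - 2)) * (r - x) := by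
      have := mul_le_mul_of_nonneg_left tangent hP.le
      rw [hP1] at this
      generalize x ^ (-1/γ - 1) = A at this ⊢
      generalize x ^ (-1/γ - 2) = B at this ⊢
      linear_combination this
    have hcoeff :
        P * x ^ (-1/γ - 2) ≤ r⁻¹ + hi ^ (1 + 1/γ) * ((2 + 1/γ) * lo ^ (-1/γ - 3) * δ) := by
      have hdiff : x ^ (-1/γ - 2) - r ^ (-1/γ - 2) ≤ (2 + 1/γ) * lo ^ (-1/γ - 3) * δ :=
        lipschitz.trans (by gcongr)
      calc P * x ^ (-1/γ - 2)
          = P * r ^ (-1/γ - 2) + P * (x ^ (-1/γ - 2) - r ^ (-1/γ - 2)) := by ring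
        _ ≤ r⁻¹ + hi ^ (1 + 1/γ) * ((2 + 1/γ) * lo ^ (-1/γ - 3) * δ) := by
          rw [hP2]
          exact add_le_add_right ((mul_le_mul_of_nonneg_left hdiff hP.le).trans
            (mul_le_mul_of_nonneg_right hPhi hL)) _
    have hrx : 0 ≤ r - x := sub_nonneg.2 hxr'
    calc (x - r) * (1 - P * x ^ (-1/γ - 1)) = (r - x) * (P * x ^ (-1/γ - 1) - 1) := by ring
      _ ≤ (r - x) * ((1 + 1/γ) * (P * x ^ (-1/γ - 2)) * (r - x)) := by gcongr
      _ ≤ (r - x) * ((1 + 1/γ) * (r⁻¹ + hi ^ (1 + 1/γ) * ((2 + 1/γ) * lo ^ (-1/γ - 3) * δ))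
            * (r - x)) := by gcongr
      _ = _ := by rw [div_eq_mul_inv]; ring

theorem pRelOfPressure_le {γ lo hi δ q r : ℝ} (hγ : 0 < γ) (hlo : 0 < lo) (hq : lo ≤ q)
    (hr : lo ≤ r) (hr' : r ≤ hi) (hqr : |q - r| ≤ δ) :
    pRelOfPressure γ q r ≤ ((γ + 1) / (2 * γ) * (1 / r)
      + (1 + 1/γ) * (2 + 1/γ) * hi ^ (1 + 1/γ) * lo ^ (-1/γ - 3) / 2 * δ) * (q - r) ^ 2 := by
  set M := (γ + 1) / (2 * γ) * (1 / r)
    + (1 + 1/γ) * (2 + 1/γ) * hi ^ (1 + 1/γ) * lo ^ (-1/γ - 3) / 2 * δ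
  have key := sub_le_sub_of_sub_mul_deriv_le
    (fun x hx => hasDerivAt_pRelOfPressure hγ.ne' ((lt_min (hlo.trans_le hq)
      (hlo.trans_le hr)).trans_le hx.1)) (fun x _ => hasDerivAt_mul_sub_sq M r x) fun x hx => by
      have hdist : |x - r| ≤ δ := (abs_sub_left_of_mem_uIcc (uIcc_comm q r ▸ hx)).trans hqr
      refine (sub_mul_one_sub_rpow_le hγ hlo ((le_min hq hr).trans hx.1) hr hr' hdist).trans
        (le_of_eq ?_)
      have : r ≠ 0 := (hlo.trans_le hr).ne'
      simp only [M]
      field_simp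
  simpa [pRelOfPressure] using key

theorem le_QRelOfPressure {γ q r : ℝ} (hγ : 0 < γ) (hγ1 : γ ≠ 1) (hq : 0 < q) (hr : 0 < r) :
    r ^ (-1/γ - 1) / (2 * γ) * (q - r) ^ 2
        - (1 + γ) / (3 * γ ^ 2) * r ^ (-1/γ - 2) * (q - r) ^ 3
      ≤ QRelOfPressure γ q r := by
  set A := r ^ (-1/γ - 1) / (2 * γ)
  set B := (1 + γ) / (3 * γ ^ 2) * r ^ (-1/γ - 2)
  have hpoly : ∀ x, HasDerivAt (fun y => A * (y - r) ^ 2 - B * (y - r) ^ 3)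
      (2 * A * (x - r) - 3 * B * (x - r) ^ 2) x := fun x => by
    refine ((hasDerivAt_mul_sub_sq A r x).sub
      ((((hasDerivAt_id' x).sub_const r).pow 3).const_mul B)).congr_deriv ?_
    norm_num
    ring
  have key := sub_le_sub_of_sub_mul_deriv_le (fun x _ => hpoly x)
    (fun x hx => hasDerivAt_QRelOfPressure hγ.ne' hγ1 ((lt_min hq hr).trans_le hx.1))
    fun x hx => by
      have tangent := Real.rpow_add_mul_sub_le_rpow_of_nonpos (c := -1/γ - 1)
        (by rw [neg_div]; linarith [one_div_pos.2 hγ]) ((lt_min hq hr).trans_le hx.1) hr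
      rw [show -1/γ - 1 - 1 = -1/γ - 2 by ring] at tangent
      calc (x - r) * (2 * A * (x - r) - 3 * B * (x - r) ^ 2)
          = (x - r) ^ 2 / γ * (r ^ (-1/γ - 1) + (-1/γ - 1) * r ^ (-1/γ - 2) * (x - r)) := by
            simp only [A, B]; field_simp; ring
        _ ≤ (x - r) ^ 2 / γ * x ^ (-1/γ - 1) := by gcongr
        _ = (x - r) * ((x - r) * x ^ (-1/γ - 1) / γ) := by ring
  simpa [QRelOfPressure] using key

theorem QRelOfPressure_le {γ lo δ q r : ℝ} (hγ : 0 < γ) (hγ1 : γ ≠ 1) (hlo : 0 < lo)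
    (hq : lo ≤ q) (hr : lo ≤ r) (hqr : |q - r| ≤ δ) :
    QRelOfPressure γ q r
      ≤ (r ^ (-1/γ - 1) / (2 * γ) + (1 + 1/γ) * lo ^ (-1/γ - 2) / (2 * γ) * δ)
        * (q - r) ^ 2 := by
  set M := r ^ (-1/γ - 1) / (2 * γ) + (1 + 1/γ) * lo ^ (-1/γ - 2) / (2 * γ) * δ
  have key := sub_le_sub_of_sub_mul_deriv_le
    (fun x hx => hasDerivAt_QRelOfPressure hγ.ne' hγ1 ((lt_min (hlo.trans_le hq)
      (hlo.trans_le hr)).trans_le hx.1)) (fun x _ => hasDerivAt_mul_sub_sq M r x) fun x hx => by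
      have lipschitz := Real.rpow_sub_rpow_le_of_nonpos (c := -1/γ - 1)
        (by rw [neg_div]; linarith [one_div_pos.2 hγ]) hlo ((le_min hq hr).trans hx.1) hr
      rw [show -1/γ - 1 - 1 = -1/γ - 2 by ring, show -(-1/γ - 1) = 1 + 1/γ by ring] at lipschitz
      have hdist : |x - r| ≤ δ := (abs_sub_left_of_mem_uIcc (uIcc_comm q r ▸ hx)).trans hqr
      have hbound : x ^ (-1/γ - 1) / γ ≤ 2 * M := by
        have : x ^ (-1/γ - 1) ≤ r ^ (-1/γ - 1) + (1 + 1/γ) * lo ^ (-1/γ - 2) * δ := by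
          have := mul_le_mul_of_nonneg_left hdist
            (by positivity : (0 : ℝ) ≤ (1 + 1/γ) * lo ^ (-1/γ - 2))
          linarith
        calc x ^ (-1/γ - 1) / γ
            ≤ (r ^ (-1/γ - 1) + (1 + 1/γ) * lo ^ (-1/γ - 2) * δ) / γ := by gcongr
          _ = 2 * M := by simp only [M]; field_simp
      calc (x - r) * ((x - r) * x ^ (-1/γ - 1) / γ)
          = (x - r) ^ 2 * (x ^ (-1/γ - 1) / γ) := by ring
        _ ≤ (x - r) ^ 2 * (2 * M) := by gcongr
        _ = (x - r) * (2 * M * (x - r)) := by ring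
  simpa [QRelOfPressure] using key

/-- Lemma 2.5 (3): sharp quadratic expansions of the relative
quantities `p(v|w)` and `Q(v|w)` in terms of `|p(v) - p(w)|`. -/
theorem relative_quantities_sharp_estimates
    (γ vplus : ℝ) (hγ : 1 < γ) (hvplus : 0 < vplus) :
    ∃ C > 0, ∃ δstar > 0, ∀ δ : ℝ, 0 < δ → δ < δstar →
      ∀ v w : ℝ, 0 < v → 0 < w →
        |pfn γ v - pfn γ w| < δ → |pfn γ w - pfn γ vplus| < δ →
        (pRel γ v w ≤ ((γ + 1) / (2 * γ) * (1 / pfn γ w) + C * δ) * |pfn γ v - pfn γ w|^2) ∧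
        ((pfn γ w ^ (-1/γ - 1) / (2 * γ)) * |pfn γ v - pfn γ w|^2
            - ((1 + γ) / (3 * γ^2)) * pfn γ w ^ (-1/γ - 2) * (pfn γ v - pfn γ w)^3
          ≤ QRel γ v w) ∧
        (QRel γ v w ≤ (pfn γ w ^ (-1/γ - 1) / (2 * γ) + C * δ) * |pfn γ v - pfn γ w|^2) := by
  have hγ0 : 0 < γ := by linarith
  set r₀ := pfn γ vplus
  have hr₀ : 0 < r₀ := Real.rpow_pos_of_pos hvplus _
  set Kp := (1 + 1/γ) * (2 + 1/γ) * (2 * r₀) ^ (1 + 1/γ) * (r₀ / 2) ^ (-1/γ - 3) / 2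
  set KQ := (1 + 1/γ) * (r₀ / 2) ^ (-1/γ - 2) / (2 * γ)
  have hKp : 0 < Kp := by positivity
  have hKQ : 0 < KQ := by positivity
  refine ⟨Kp + KQ, by positivity, r₀ / 4, by positivity,
    fun δ hδ hδstar v w hv hw hvw hw₀ => ?_⟩
  rw [pRel_eq_pRelOfPressure hγ0.ne' hv hw, QRel_eq_QRelOfPressure hγ0.ne' hv hw, sq_abs]
  set q := pfn γ v
  set r := pfn γ w
  obtain ⟨hvw₁, hvw₂⟩ := abs_lt.1 hvw
  obtain ⟨hw₀₁, hw₀₂⟩ := abs_lt.1 hw₀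
  have hq : r₀ / 2 ≤ q := by linarith
  have hr : r₀ / 2 ≤ r := by linarith
  have hr' : r ≤ 2 * r₀ := by linarith
  refine ⟨(pRelOfPressure_le hγ0 (by positivity) hq hr hr' hvw.le).trans ?_,
    le_QRelOfPressure hγ0 hγ.ne' (by linarith) (by linarith),
    (QRelOfPressure_le hγ0 hγ.ne' (by positivity) hq hr hvw.le).trans ?_⟩
  · gcongr
    exact le_add_of_nonneg_right hKQ.le
  · gcongr
    exact le_add_of_nonneg_left hKp.le

end NS3D
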